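/- arXiv:1910.06830 — 4 statements merged into one kernel-verified Lean document; each statement's English description precedes it below -/
import Mathlib

section
/- Let C be a cyclic code of length n over R = F_q + uF_q, with canonical monic divisors g(x) and a(x) of x^n − 1 generating π(C) and Tor(C) respectively. If p(x) ∈ F_q[x] is any polynomial such that the image of g(x) + u·p(x) in R_n lies in C, then a(x) divides p(x)·((x^n − 1)/g(x)) in F_q[x]. -/
/-!
With `h = (x^n - 1)/g` we have `g h = 0` in `F_q[x]/(x^n - 1)`, so multiplying the codeword
`g + u p` by `h` leaves `u p h ∈ C`, i.e. `p h ∈ Tor(C) = ⟨a⟩`. Since `a ∣ x^n - 1`, membership of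
`p h` in `⟨a⟩` modulo `x^n - 1` already means `a ∣ p h` in `F_q[x]`.
-/

open Polynomial

noncomputable section

/-- The ambient ring `S[x]/(x^n - 1)`. -/
abbrev Amb (S : Type) [CommRing S] (n : ℕ) : Type := AdjoinRoot (X ^ n - 1 : S[X])

/-- The image of a polynomial `f ∈ S[x]` in `S[x]/(x^n - 1)`. -/
def toAmb (S : Type) [CommRing S] (n : ℕ) (f : S[X]) : Amb S n := AdjoinRoot.mk _ f

lemma root_pow_sub_one (S : Type) [CommRing S] (n : ℕ) :
    (AdjoinRoot.root (X ^ n - 1 : S[X])) ^ n - 1 = 0 := by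
  have h : (AdjoinRoot.mk (X ^ n - 1 : S[X])) (X ^ n - 1 : S[X]) = 0 := AdjoinRoot.mk_self
  simpa [map_sub, map_pow, AdjoinRoot.mk_X] using h

/-- The ring hom `S[x]/(x^n-1) → T[x]/(x^n-1)` induced by `φ : S →+* T`. -/
def liftAmb {S T : Type} [CommRing S] [CommRing T] (n : ℕ) (φ : S →+* T) :
    Amb S n →+* Amb T n :=
  AdjoinRoot.lift ((AdjoinRoot.of _).comp φ) (AdjoinRoot.root _) (by
    have h := root_pow_sub_one T n
    simp [eval₂_sub, eval₂_pow, eval₂_one, eval₂_X, h])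

/-- Reduction mod `u`: the homomorphism `π : R_n → F_q[x]/(x^n-1)` induced by
the projection `F_q + uF_q → F_q`. -/
def redMod (F : Type) [Field F] (n : ℕ) : Amb (DualNumber F) n →+* Amb F n :=
  liftAmb n (TrivSqZeroExt.fstHom F F F).toRingHom

/-- The inclusion `F_q[x]/(x^n-1) → R_n` induced by `F_q ⊆ F_q + uF_q`. -/
def emb (F : Type) [Field F] (n : ℕ) : Amb F n →+* Amb (DualNumber F) n :=
  liftAmb n (algebraMap F (DualNumber F))

/-- The element `u` of `R_n = (F_q + uF_q)[x]/(x^n-1)`. -/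
def uE (F : Type) [Field F] (n : ℕ) : Amb (DualNumber F) n :=
  AdjoinRoot.of _ (DualNumber.eps : DualNumber F)

/-- The torsion code `Tor(C) = {r ∈ F_q[x]/(x^n-1) : u·r ∈ C}` of a cyclic code
`C ⊆ R_n`. -/
def Tor (F : Type) [Field F] (n : ℕ) (C : Ideal (Amb (DualNumber F) n)) : Set (Amb F n) :=
  {r | uE F n * emb F n r ∈ C}

/-- A set of codewords (identified with residue classes in `S[x]/(x^n-1)`) is
reversible if, for each codeword with coefficient vector `(c_0, …, c_{n-1})`
(i.e. each representative of degree `< n`), the reversed word `(c_{n-1}, …, c_0)`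
is again a codeword.  Here `Polynomial.reflect (n-1)` realizes the reversal of
the coefficient vector of a polynomial of degree `< n`. -/
def ReversibleCode (S : Type) [CommRing S] (n : ℕ) (D : Set (Amb S n)) : Prop :=
  ∀ f : S[X], f.degree < (n : ℕ) → toAmb S n f ∈ D →
    toAmb S n (f.reflect (n - 1)) ∈ D

/-- The Euclidean dual code of a code `C ⊆ S[x]/(x^n-1)`: all residue classes whose
coefficient vector (of the degree `< n` representative) is orthogonal to the
coefficient vector of every codeword of `C`. -/
def dualCode (S : Type) [CommRing S] (n : ℕ) (C : Set (Amb S n)) : Set (Amb S n) :=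
  {w | ∀ wp : S[X], wp.degree < (n : ℕ) → toAmb S n wp = w →
    ∀ cp : S[X], cp.degree < (n : ℕ) → toAmb S n cp ∈ C →
      ∑ i ∈ Finset.range n, wp.coeff i * cp.coeff i = 0}

/-- The minimum Hamming distance of a code `C ⊆ S[x]/(x^n-1)`: the least Hamming
weight of (the coefficient vector of) a nonzero codeword. -/
def dH (S : Type) [CommRing S] (n : ℕ) (C : Set (Amb S n)) : ℕ :=
  sInf {d | ∃ cp : S[X], cp.degree < (n : ℕ) ∧ cp ≠ 0 ∧ toAmb S n cp ∈ C ∧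
    cp.support.card = d}

end

lemma toAmb_mul (S : Type) [CommRing S] (n : ℕ) (f g : S[X]) :
    toAmb S n (f * g) = toAmb S n f * toAmb S n g :=
  map_mul (AdjoinRoot.mk _) f g

lemma toAmb_mul_div_eq_zero {F : Type} [Field F] {n : ℕ} {g : F[X]} (hg : g ∣ X ^ n - 1) :
    toAmb F n g * toAmb F n ((X ^ n - 1) / g) = 0 := by
  rw [← toAmb_mul, toAmb, AdjoinRoot.mk_eq_zero]
  rcases eq_or_ne g 0 with rfl | hg0
  · rw [zero_mul]
    exact dvd_zero _
  · rw [EuclideanDomain.mul_div_cancel' hg0 hg]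

lemma dvd_of_toAmb_mem_span {S : Type} [CommRing S] {n : ℕ} {a f : S[X]}
    (ha : a ∣ X ^ n - 1) (hf : toAmb S n f ∈ Ideal.span {toAmb S n a}) : a ∣ f := by
  rw [toAmb, toAmb, ← Set.image_singleton, ← Ideal.map_span] at hf
  exact Ideal.mem_span_singleton.1
    ((Ideal.mem_quotient_iff_mem (Ideal.span_singleton_le_span_singleton.2 ha)).1 hf)

lemma mul_mem_Tor_of_mul_eq_zero {F : Type} [Field F] {n : ℕ} {C : Ideal (Amb (DualNumber F) n)}
    {x y z : Amb F n} (hxz : x * z = 0) (h : emb F n x + uE F n * emb F n y ∈ C) :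
    y * z ∈ Tor F n C := by
  have hmem := C.mul_mem_right (emb F n z) h
  rwa [add_mul, ← map_mul, hxz, map_zero, zero_add, mul_assoc, ← map_mul] at hmem

theorem stmt1_general {F : Type} [Field F] {n : ℕ}
    (C : Ideal (Amb (DualNumber F) n)) (g a : F[X])
    (hgdvd : g ∣ X ^ n - 1) (hadvd : a ∣ X ^ n - 1)
    (haC : Tor F n C = ↑(Ideal.span {toAmb F n a}))
    (p : F[X])
    (hpC : emb F n (toAmb F n g) + uE F n * emb F n (toAmb F n p) ∈ C) :
    a ∣ p * ((X ^ n - 1) / g) := by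
  have hTor := mul_mem_Tor_of_mul_eq_zero (toAmb_mul_div_eq_zero hgdvd) hpC
  rw [← toAmb_mul, haC] at hTor
  exact dvd_of_toAmb_mem_span hadvd hTor

/-- if `g(x) + u·p(x) ∈ C`, then `a(x) ∣ p(x)·((x^n-1)/g(x))`. -/
theorem stmt1 {F : Type} [Field F] [Fintype F] {n : ℕ} (hn : 0 < n)
    (C : Ideal (Amb (DualNumber F) n)) (g a : F[X])
    (hgm : g.Monic) (ham : a.Monic)
    (hgdvd : g ∣ X ^ n - 1) (hadvd : a ∣ X ^ n - 1)
    (hgC : Ideal.map (redMod F n) C = Ideal.span {toAmb F n g})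
    (haC : Tor F n C = ↑(Ideal.span {toAmb F n a}))
    (p : F[X])
    (hpC : emb F n (toAmb F n g) + uE F n * emb F n (toAmb F n p) ∈ C) :
    a ∣ p * ((X ^ n - 1) / g) :=
  stmt1_general C g a hgdvd hadvd haC p hpC
end

section
/- Every cyclic code C of length n over R = F_q + uF_q can be written as C = ⟨g(x) + u·p(x), u·a(x)⟩, i.e. C is the ideal of R_n generated by the images of g(x) + u·p(x) and u·a(x), for some polynomial p(x) ∈ F_q[x] with deg p(x) < deg a(x), where g(x) and a(x) are the canonical monic divisors of x^n − 1 generating π(C) and Tor(C) respectively. -/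
open Polynomial

/-! Every element of `R_n` is `x + u·y` with `x, y ∈ F_q[x]/(x^n-1)`, and `π(x + u·y) = x`.
Lifting `g` to `C` gives `g + u·p₀ ∈ C`, and subtracting the multiple `u·a·(p₀ div a)` of
`u·a ∈ C` replaces `p₀` by its remainder `p` modulo `a`. Conversely, if `c ∈ C` and
`π(c) = m·g`, then `c - m·(g + u·p)` lies in `C ∩ ker π = u·Tor(C)`, so it is a multiple
of `u·a`. -/

namespace CyclicCode

variable {F : Type} [Field F] {n : ℕ}

lemma liftAmb_mk {S T : Type} [CommRing S] [CommRing T] (φ : S →+* T) (f : S[X]) :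
    liftAmb n φ (AdjoinRoot.mk _ f) = AdjoinRoot.mk _ (f.map φ) := by
  rw [liftAmb, AdjoinRoot.lift_mk, ← AdjoinRoot.aeval_eq, aeval_def, eval₂_map,
    AdjoinRoot.algebraMap_eq]

lemma redMod_emb (x : Amb F n) : redMod F n (emb F n x) = x := by
  obtain ⟨f, rfl⟩ := AdjoinRoot.mk_surjective x
  have hid : (TrivSqZeroExt.fstHom F F F).toRingHom.comp (algebraMap F (DualNumber F)) =
      RingHom.id F := by
    ext; rfl
  rw [emb, redMod, liftAmb_mk, liftAmb_mk, Polynomial.map_map, hid, Polynomial.map_id]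

lemma redMod_surjective : Function.Surjective (redMod F n) :=
  fun x => ⟨emb F n x, redMod_emb x⟩

lemma redMod_uE : redMod F n (uE F n) = 0 := by
  change liftAmb n _ (AdjoinRoot.mk _ (C DualNumber.eps)) = 0
  rw [liftAmb_mk, Polynomial.map_C,
    show (TrivSqZeroExt.fstHom F F F).toRingHom DualNumber.eps = 0 from TrivSqZeroExt.fst_inr F 1,
    C_0, map_zero]

lemma redMod_emb_add_uE_mul_emb (x y : Amb F n) :
    redMod F n (emb F n x + uE F n * emb F n y) = x := by
  rw [map_add, map_mul, redMod_uE, zero_mul, add_zero, redMod_emb]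

lemma exists_eq_emb_add_uE_mul_emb (c : Amb (DualNumber F) n) :
    ∃ x y : Amb F n, c = emb F n x + uE F n * emb F n y := by
  obtain ⟨f, rfl⟩ := AdjoinRoot.mk_surjective c
  induction f using Polynomial.induction_on' with
  | add f₁ f₂ h₁ h₂ =>
    obtain ⟨x₁, y₁, h₁⟩ := h₁
    obtain ⟨x₂, y₂, h₂⟩ := h₂
    exact ⟨x₁ + x₂, y₁ + y₂, by rw [map_add, h₁, h₂, map_add, map_add]; ring⟩
  | monomial k r =>
    refine ⟨AdjoinRoot.mk _ (monomial k r.fst), AdjoinRoot.mk _ (monomial k r.snd), ?_⟩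
    have hr :
        algebraMap F (DualNumber F) r.fst + DualNumber.eps * algebraMap F _ r.snd = r := by
      rw [TrivSqZeroExt.algebraMap_eq_inl, DualNumber.eps,
        TrivSqZeroExt.inr_mul_inl, op_smul_eq_mul, one_mul]
      exact TrivSqZeroExt.inl_fst_add_inr_snd_eq r
    rw [emb, liftAmb_mk, liftAmb_mk, uE, ← AdjoinRoot.mk_C, ← map_mul, ← map_add,
      Polynomial.map_monomial, Polynomial.map_monomial, C_mul_monomial, ← (monomial k).map_add,
      hr]

lemma exists_eq_uE_mul_emb_of_redMod_eq_zero {c : Amb (DualNumber F) n}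
    (hc : redMod F n c = 0) : ∃ w : Amb F n, c = uE F n * emb F n w := by
  obtain ⟨x, y, rfl⟩ := exists_eq_emb_add_uE_mul_emb c
  rw [redMod_emb_add_uE_mul_emb] at hc
  exact ⟨y, by rw [hc, map_zero, zero_add]⟩

variable {C : Ideal (Amb (DualNumber F) n)}

lemma exists_emb_add_uE_mul_emb_mem {γ : Amb F n} (hγ : γ ∈ C.map (redMod F n)) :
    ∃ w : Amb F n, emb F n γ + uE F n * emb F n w ∈ C := by
  obtain ⟨c, hc, rfl⟩ := (Ideal.mem_map_iff_of_surjective _ redMod_surjective).mp hγ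
  obtain ⟨x, y, rfl⟩ := exists_eq_emb_add_uE_mul_emb c
  exact ⟨y, by rwa [redMod_emb_add_uE_mul_emb]⟩

lemma emb_add_uE_mul_emb_modByMonic_mem {γ : Amb F n} {a p : F[X]}
    (ha : toAmb F n a ∈ Tor F n C)
    (hp : emb F n γ + uE F n * emb F n (toAmb F n p) ∈ C) :
    emb F n γ + uE F n * emb F n (toAmb F n (p %ₘ a)) ∈ C := by
  have hdiv : toAmb F n p = toAmb F n (p %ₘ a) + toAmb F n a * toAmb F n (p /ₘ a) := by
    simp only [toAmb, ← map_mul, ← map_add, modByMonic_add_div]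
  have hsub : emb F n γ + uE F n * emb F n (toAmb F n (p %ₘ a)) =
      (emb F n γ + uE F n * emb F n (toAmb F n p)) -
        uE F n * emb F n (toAmb F n a) * emb F n (toAmb F n (p /ₘ a)) := by
    rw [hdiv, map_add, map_mul]
    ring
  rw [hsub]
  exact C.sub_mem hp (C.mul_mem_right _ ha)

lemma eq_span_pair_of_map_redMod_eq_span {γ α : Amb F n} {G : Amb (DualNumber F) n}
    (hγ : C.map (redMod F n) = Ideal.span {γ}) (hα : Tor F n C = Ideal.span {α})
    (hG : G ∈ C) (hGγ : redMod F n G = γ) : C = Ideal.span {G, uE F n * emb F n α} := by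
  have hA : uE F n * emb F n α ∈ C :=
    show α ∈ Tor F n C from hα ▸ Ideal.mem_span_singleton_self α
  refine le_antisymm (fun c hc => ?_) (Ideal.span_le.mpr ?_)
  · obtain ⟨m, hm⟩ :=
      Ideal.mem_span_singleton'.mp (hγ ▸ Ideal.mem_map_of_mem (redMod F n) hc)
    obtain ⟨w, hw⟩ := exists_eq_uE_mul_emb_of_redMod_eq_zero (c := c - emb F n m * G)
      (by rw [map_sub, map_mul, redMod_emb, hGγ, hm, sub_self])
    have hwC : w ∈ Tor F n C := show uE F n * emb F n w ∈ C from
      hw ▸ C.sub_mem hc (C.mul_mem_left _ hG)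
    rw [hα] at hwC
    obtain ⟨s, rfl⟩ := Ideal.mem_span_singleton'.mp hwC
    have hc : c = emb F n m * G + emb F n s * (uE F n * emb F n α) := by
      rw [map_mul] at hw
      linear_combination hw
    rw [hc]
    exact Ideal.add_mem _ (Ideal.mul_mem_left _ _ (Ideal.subset_span (by simp)))
      (Ideal.mul_mem_left _ _ (Ideal.subset_span (by simp)))
  · rintro x (rfl | rfl)
    exacts [hG, hA]

end CyclicCode

open CyclicCode

theorem stmt2_general {F : Type} [Field F] {n : ℕ}
    (C : Ideal (Amb (DualNumber F) n)) (g a : F[X])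
    (ham : a.Monic)
    (hgC : Ideal.map (redMod F n) C = Ideal.span {toAmb F n g})
    (haC : Tor F n C = ↑(Ideal.span {toAmb F n a})) :
    ∃ p : F[X], p.degree < a.degree ∧
      C = Ideal.span {emb F n (toAmb F n g) + uE F n * emb F n (toAmb F n p),
        uE F n * emb F n (toAmb F n a)} := by
  obtain ⟨w, hw⟩ :=
    exists_emb_add_uE_mul_emb_mem (hgC ▸ Ideal.mem_span_singleton_self (toAmb F n g))
  obtain ⟨p, rfl⟩ : ∃ p, toAmb F n p = w := AdjoinRoot.mk_surjective w
  have haTor : toAmb F n a ∈ Tor F n C := haC ▸ Ideal.mem_span_singleton_self _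
  exact ⟨p %ₘ a, degree_modByMonic_lt p ham, eq_span_pair_of_map_redMod_eq_span hgC haC
    (emb_add_uE_mul_emb_modByMonic_mem haTor hw) (redMod_emb_add_uE_mul_emb _ _)⟩

/-- every cyclic code over `R` is `⟨g(x) + u·p(x), u·a(x)⟩` for
some `p(x)` with `deg p < deg a`. -/
theorem stmt2 {F : Type} [Field F] [Fintype F] {n : ℕ} (hn : 0 < n)
    (C : Ideal (Amb (DualNumber F) n)) (g a : F[X])
    (hgm : g.Monic) (ham : a.Monic)
    (hgdvd : g ∣ X ^ n - 1) (hadvd : a ∣ X ^ n - 1)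
    (hgC : Ideal.map (redMod F n) C = Ideal.span {toAmb F n g})
    (haC : Tor F n C = ↑(Ideal.span {toAmb F n a})) :
    ∃ p : F[X], p.degree < a.degree ∧
      C = Ideal.span {emb F n (toAmb F n g) + uE F n * emb F n (toAmb F n p),
        uE F n * emb F n (toAmb F n a)} :=
  stmt2_general C g a ham hgC haC
end

section
/- Suppose n is relatively prime to q (equivalently, the characteristic p of F_q does not divide n). Let C be a cyclic code of length n over R = F_q + uF_q with canonical monic divisors g(x) and a(x) of x^n − 1 generating π(C) and Tor(C). Then C = ⟨g(x), u·a(x)⟩, and moreover this ideal coincides with the principal ideal ⟨g(x) + u·a(x)⟩ of R_n. -/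
open Polynomial

/-!
Since `p ∤ n`, `x^n - 1` is separable, so `g` and `(x^n - 1)/g` are coprime and `ḡ s ḡ = ḡ` in
`F_q[x]/(x^n - 1)` for some `s`. Every element of `R_n` is `b + u r` with `b, r ∈ F_q[x]/(x^n - 1)`.
Lift `ḡ` to some `c = g + u r ∈ C`: then `u c = u g ∈ C`, so `g ∈ Tor(C) = ⟨a⟩`, and therefore
`c · s g - u r s g = g` lies in `C`. Decomposing an arbitrary codeword now gives `C = ⟨g, u a⟩`.
Finally, as `u² = 0`, `(g + u a)(1 - s g + s u a) = u a`, whence `⟨g, u a⟩ = ⟨g + u a⟩`.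
-/

lemma natCast_ne_zero_of_coprime_card {F : Type*} [Field F] [Fintype F] {n : ℕ}
    (h : n.Coprime (Fintype.card F)) : (n : F) ≠ 0 := fun hn =>
  CharP.ringChar_ne_one <| Nat.Coprime.eq_one_of_dvd
    (Nat.Coprime.coprime_dvd_left (ringChar.dvd hn) h) (ringChar.dvd (FiniteField.cast_card_eq_zero F))

lemma AdjoinRoot.exists_mk_mul_mul_mk_eq_of_dvd {R : Type*} [CommRing R] {f g : R[X]}
    (hf : f.Separable) (hg : g ∣ f) : ∃ s, mk f g * s * mk f g = mk f g := by
  obtain ⟨b, rfl⟩ := hg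
  obtain ⟨s, t, hst⟩ := hf.isCoprime
  refine ⟨mk _ s, ?_⟩
  rw [← map_mul, ← map_mul, mk_eq_mk]
  exact ⟨-t, by linear_combination g * hst⟩

lemma Ideal.span_pair_eq_span_singleton_add {A : Type*} [CommRing A] {x y s : A}
    (hx : x * s * x = x) (hy : y * y = 0) : Ideal.span {x, y} = Ideal.span {x + y} := by
  have hy' : y ∈ Ideal.span {x + y} :=
    Ideal.mem_span_singleton'.mpr ⟨1 - s * x + s * y, by linear_combination -hx + s * hy⟩
  have hx' : x ∈ Ideal.span {x + y} := by
    simpa using Ideal.sub_mem _ (Ideal.mem_span_singleton_self (x + y)) hy'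
  refine le_antisymm (Ideal.span_le.mpr (by simp [Set.insert_subset_iff, *])) ?_
  exact Ideal.span_le.mpr <| Set.singleton_subset_iff.mpr <|
    Ideal.add_mem _ (Ideal.subset_span (by simp)) (Ideal.subset_span (by simp))

section DualNumberCode

variable {F : Type} [Field F] {n : ℕ}

lemma liftAmb_mk {S T : Type} [CommRing S] [CommRing T] (φ : S →+* T) (f : S[X]) :
    liftAmb n φ (AdjoinRoot.mk _ f) = AdjoinRoot.mk _ (f.map φ) := by
  rw [liftAmb, AdjoinRoot.lift_mk, ← AdjoinRoot.aeval_eq, aeval_def, ← AdjoinRoot.algebraMap_eq,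
    eval₂_map]

lemma redMod_emb (z : Amb F n) : redMod F n (emb F n z) = z := by
  obtain ⟨f, rfl⟩ := AdjoinRoot.mk_surjective z
  rw [emb, redMod, liftAmb_mk, liftAmb_mk, Polynomial.map_map]
  exact congrArg _ (by convert Polynomial.map_id; exact RingHom.ext fun _ => rfl)

lemma redMod_surjective : Function.Surjective (redMod F n) :=
  fun z => ⟨emb F n z, redMod_emb z⟩

lemma uE_mul_self : uE F n * uE F n = 0 := by
  rw [uE, ← map_mul, DualNumber.eps_mul_eps, map_zero]

lemma mem_Tor_iff {C : Ideal (Amb (DualNumber F) n)} {r : Amb F n} :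
    r ∈ Tor F n C ↔ uE F n * emb F n r ∈ C :=
  Iff.rfl

lemma exists_eq_emb_redMod_add_uE_mul (z : Amb (DualNumber F) n) :
    ∃ y, z = emb F n (redMod F n z) + uE F n * emb F n y := by
  obtain ⟨f, rfl⟩ := AdjoinRoot.mk_surjective z
  induction f using Polynomial.induction_on' with
  | add f₁ f₂ h₁ h₂ =>
    obtain ⟨y₁, hy₁⟩ := h₁
    obtain ⟨y₂, hy₂⟩ := h₂
    refine ⟨y₁ + y₂, ?_⟩
    simp only [map_add]
    linear_combination hy₁ + hy₂
  | monomial i c =>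
    -- `c = fst c + ε · snd c` coefficientwise
    refine ⟨AdjoinRoot.mk _ (monomial i c.snd), ?_⟩
    simp only [redMod, emb, uE, liftAmb_mk, map_monomial, ← AdjoinRoot.mk_C, ← map_mul,
      ← map_add, C_mul_monomial]
    congr 2
    ext <;> simp [TrivSqZeroExt.algebraMap_eq_inl]

variable {C : Ideal (Amb (DualNumber F) n)} {g a : Amb F n}

lemma emb_mem_of_map_eq_of_Tor_eq (s : Amb F n) (hg : g * s * g = g)
    (hgC : C.map (redMod F n) = Ideal.span {g}) (haC : Tor F n C = ↑(Ideal.span {a})) :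
    emb F n g ∈ C := by
  obtain ⟨c, hcC, hcg⟩ := (Ideal.mem_map_iff_of_surjective _ redMod_surjective).mp
    (hgC ▸ Ideal.mem_span_singleton_self g)
  obtain ⟨r, hr⟩ := exists_eq_emb_redMod_add_uE_mul c
  rw [hcg] at hr
  have hga : g ∈ Ideal.span {a} := by
    rw [← SetLike.mem_coe, ← haC, mem_Tor_iff]
    convert C.mul_mem_left (uE F n) hcC using 1
    rw [hr, mul_add, ← mul_assoc, uE_mul_self, zero_mul, add_zero]
  have hrsg : uE F n * emb F n (r * s * g) ∈ C := by
    rw [← mem_Tor_iff, haC]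
    exact Ideal.mul_mem_left _ _ hga
  convert C.sub_mem (C.mul_mem_right (emb F n (s * g)) hcC) hrsg using 1
  have hg' := congrArg (emb F n) hg
  rw [hr]
  simp only [map_mul] at hg' ⊢
  linear_combination -hg'

lemma eq_span_pair_of_map_eq_of_Tor_eq (s : Amb F n) (hg : g * s * g = g)
    (hgC : C.map (redMod F n) = Ideal.span {g}) (haC : Tor F n C = ↑(Ideal.span {a})) :
    C = Ideal.span {emb F n g, uE F n * emb F n a} := by
  have hgC' : emb F n g ∈ C := emb_mem_of_map_eq_of_Tor_eq s hg hgC haC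
  have haC' : uE F n * emb F n a ∈ C := by
    rw [← mem_Tor_iff, haC]
    exact Ideal.mem_span_singleton_self a
  refine le_antisymm (fun z hz => ?_) (Ideal.span_le.mpr (by simp [Set.insert_subset_iff, *]))
  obtain ⟨w, hw⟩ := Ideal.mem_span_singleton'.mp (hgC ▸ Ideal.mem_map_of_mem (redMod F n) hz)
  obtain ⟨y, hy⟩ := exists_eq_emb_redMod_add_uE_mul z
  rw [← hw, map_mul] at hy
  have hyC : y ∈ Ideal.span {a} := by
    rw [← SetLike.mem_coe, ← haC, mem_Tor_iff, eq_sub_of_add_eq' hy.symm]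
    exact C.sub_mem hz (C.mul_mem_left _ hgC')
  obtain ⟨v, rfl⟩ := Ideal.mem_span_singleton'.mp hyC
  exact Ideal.mem_span_pair.mpr ⟨emb F n w, emb F n v, by rw [hy, map_mul]; ring⟩

end DualNumberCode

theorem stmt4_general {F : Type} [Field F] [Fintype F] {n : ℕ}
    (hco : Nat.Coprime n (Fintype.card F))
    (C : Ideal (Amb (DualNumber F) n)) (g a : F[X])
    (hgdvd : g ∣ X ^ n - 1)
    (hgC : Ideal.map (redMod F n) C = Ideal.span {toAmb F n g})
    (haC : Tor F n C = ↑(Ideal.span {toAmb F n a})) :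
    C = Ideal.span {emb F n (toAmb F n g), uE F n * emb F n (toAmb F n a)} ∧
    C = Ideal.span {emb F n (toAmb F n g) + uE F n * emb F n (toAmb F n a)} := by
  have hsep : (X ^ n - 1 : F[X]).Separable := by
    simpa using separable_X_pow_sub_C (1 : F) (natCast_ne_zero_of_coprime_card hco) one_ne_zero
  obtain ⟨s, hs⟩ : ∃ s, toAmb F n g * s * toAmb F n g = toAmb F n g :=
    AdjoinRoot.exists_mk_mul_mul_mk_eq_of_dvd hsep hgdvd
  have hC := eq_span_pair_of_map_eq_of_Tor_eq s hs hgC haC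
  refine ⟨hC, hC.trans (Ideal.span_pair_eq_span_singleton_add (s := emb F n s) ?_ ?_)⟩
  · simpa only [map_mul] using congrArg (emb F n) hs
  · rw [mul_mul_mul_comm, uE_mul_self, zero_mul]

/-- if `gcd(n, q) = 1` then `C = ⟨g(x), u·a(x)⟩ = ⟨g(x) + u·a(x)⟩`. -/
theorem stmt4 {F : Type} [Field F] [Fintype F] {n : ℕ} (hn : 0 < n)
    (hco : Nat.Coprime n (Fintype.card F))
    (C : Ideal (Amb (DualNumber F) n)) (g a : F[X])
    (hgm : g.Monic) (ham : a.Monic)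
    (hgdvd : g ∣ X ^ n - 1) (hadvd : a ∣ X ^ n - 1)
    (hgC : Ideal.map (redMod F n) C = Ideal.span {toAmb F n g})
    (haC : Tor F n C = ↑(Ideal.span {toAmb F n a})) :
    C = Ideal.span {emb F n (toAmb F n g), uE F n * emb F n (toAmb F n a)} ∧
    C = Ideal.span {emb F n (toAmb F n g) + uE F n * emb F n (toAmb F n a)} :=
  stmt4_general hco C g a hgdvd hgC haC
end

section
/- Let C be a reversible cyclic code of length n over R = F_q + uF_q, with canonical monic divisors g(x) and a(x) of x^n − 1 generating π(C) and Tor(C) respectively. Then both ⟨g(x)⟩ = π(C) and ⟨a(x)⟩ = Tor(C) are reversible cyclic codes of length n over F_q. -/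
open Polynomial

/-!
Reversal of a word of length `n` is `Polynomial.reflect (n - 1)` on its representative of
degree `< n`, and it commutes both with coefficientwise ring homomorphisms and with
multiplication by constants. Hence reversibility passes to the image of a code under
`S[x]/(x^n-1) → T[x]/(x^n-1)` (using that a residue class has exactly one representative of
degree `< n`), and to preimages under such maps and under multiplication by a constant.
Now `π(C)` is the image of `C` under reduction mod `u`, and `Tor(C)` is the preimage of `C`
under `r ↦ u · r`.
-/

namespace Polynomial

variable {S : Type} [CommRing S] {n : ℕ}

lemma monic_X_pow_sub_one (hn : 0 < n) : (X ^ n - 1 : S[X]).Monic := by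
  simpa using monic_X_pow_sub_C (1 : S) hn.ne'

lemma degree_X_pow_sub_one [Nontrivial S] (hn : 0 < n) : (X ^ n - 1 : S[X]).degree = n := by
  simpa using degree_X_pow_sub_C hn (1 : S)

end Polynomial

section Amb

variable {S T : Type} [CommRing S] [CommRing T] {n : ℕ}

lemma liftAmb_toAmb (φ : S →+* T) (f : S[X]) :
    liftAmb n φ (toAmb S n f) = toAmb T n (f.map φ) := by
  rw [liftAmb, toAmb, AdjoinRoot.lift_mk, ← eval₂_map]
  exact AdjoinRoot.aeval_eq _

lemma liftAmb_surjective {φ : S →+* T} (hφ : Function.Surjective φ) :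
    Function.Surjective (liftAmb n φ) := by
  intro z
  obtain ⟨q, rfl⟩ := AdjoinRoot.mk_surjective z
  obtain ⟨p, rfl⟩ := map_surjective φ hφ q
  exact ⟨toAmb S n p, liftAmb_toAmb φ p⟩

lemma modByMonicHom_toAmb [Nontrivial S] (hn : 0 < n) {f : S[X]} (hf : f.degree < n) :
    AdjoinRoot.modByMonicHom (monic_X_pow_sub_one (S := S) hn) (toAmb S n f) = f := by
  rw [toAmb, AdjoinRoot.modByMonicHom_mk, modByMonic_eq_self_iff (monic_X_pow_sub_one hn),
    degree_X_pow_sub_one hn]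
  exact hf

lemma eq_of_toAmb_eq [Nontrivial S] (hn : 0 < n) {f g : S[X]} (hf : f.degree < n)
    (hg : g.degree < n) (h : toAmb S n f = toAmb S n g) : f = g := by
  rw [← modByMonicHom_toAmb hn hf, ← modByMonicHom_toAmb hn hg, h]

lemma exists_toAmb_eq [Nontrivial S] (hn : 0 < n) (z : Amb S n) :
    ∃ p : S[X], p.degree < n ∧ toAmb S n p = z := by
  refine ⟨AdjoinRoot.modByMonicHom (monic_X_pow_sub_one (S := S) hn) z, ?_,
    AdjoinRoot.mk_leftInverse (monic_X_pow_sub_one (S := S) hn) z⟩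
  obtain ⟨q, rfl⟩ := AdjoinRoot.mk_surjective z
  rw [AdjoinRoot.modByMonicHom_mk, ← degree_X_pow_sub_one (S := S) hn]
  exact degree_modByMonic_lt q (monic_X_pow_sub_one hn)

end Amb

namespace ReversibleCode

variable {S T : Type} [CommRing S] [CommRing T] {n : ℕ} {D : Set (Amb S n)}

lemma image_liftAmb [Nontrivial T] (hn : 0 < n) (hD : ReversibleCode S n D) (φ : S →+* T) :
    ReversibleCode T n (liftAmb n φ '' D) := by
  have : Nontrivial S := φ.domain_nontrivial
  rintro f hf ⟨w, hwD, hw⟩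
  obtain ⟨p, hp, rfl⟩ := exists_toAmb_eq hn w
  have hfp : f = p.map φ := by
    refine eq_of_toAmb_eq hn hf (degree_map_le.trans_lt hp) ?_
    rw [← hw, liftAmb_toAmb]
  exact ⟨_, hD p hp hwD, by rw [liftAmb_toAmb, ← reflect_map, hfp]⟩

lemma preimage_liftAmb (hD : ReversibleCode S n D) (ψ : T →+* S) :
    ReversibleCode T n (liftAmb n ψ ⁻¹' D) := by
  intro f hf hfD
  rw [Set.mem_preimage, liftAmb_toAmb] at hfD ⊢
  rw [← reflect_map]
  exact hD _ (degree_map_le.trans_lt hf) hfD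

lemma preimage_const_mul (hD : ReversibleCode S n D) (c : S) :
    ReversibleCode S n ((AdjoinRoot.of _ c * ·) ⁻¹' D) := by
  have hmul (p : S[X]) : AdjoinRoot.of _ c * toAmb S n p = toAmb S n (C c * p) :=
    (map_mul (AdjoinRoot.mk _) (C c) p).symm
  intro f hf hfD
  rw [Set.mem_preimage, hmul] at hfD ⊢
  rw [← reflect_C_mul]
  exact hD _ (((degree_mul_le _ _).trans (add_le_of_nonpos_left degree_C_le)).trans_lt hf) hfD

end ReversibleCode

theorem stmt7_general {F : Type} [Field F] {n : ℕ} (hn : 0 < n)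
    (C : Ideal (Amb (DualNumber F) n)) (g a : F[X])
    (hgC : Ideal.map (redMod F n) C = Ideal.span {toAmb F n g})
    (haC : Tor F n C = ↑(Ideal.span {toAmb F n a}))
    (hrev : ReversibleCode (DualNumber F) n ↑C) :
    ReversibleCode F n ↑(Ideal.span {toAmb F n g}) ∧
    ReversibleCode F n ↑(Ideal.span {toAmb F n a}) := by
  have hπ : Function.Surjective (redMod F n) :=
    liftAmb_surjective TrivSqZeroExt.fst_surjective
  have hπC : (Ideal.map (redMod F n) C : Set (Amb F n)) = redMod F n '' C :=
    Set.ext fun _ => Ideal.mem_map_iff_of_surjective _ hπ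
  refine ⟨?_, ?_⟩
  · rw [← hgC, hπC]
    exact hrev.image_liftAmb hn _
  · rw [← haC]
    exact (hrev.preimage_const_mul DualNumber.eps).preimage_liftAmb _

/-- if `C` is reversible then both `π(C) = ⟨g(x)⟩` and
`Tor(C) = ⟨a(x)⟩` are reversible cyclic codes over `F_q`. -/
theorem stmt7 {F : Type} [Field F] [Fintype F] {n : ℕ} (hn : 0 < n)
    (C : Ideal (Amb (DualNumber F) n)) (g a : F[X])
    (hgm : g.Monic) (ham : a.Monic)
    (hgdvd : g ∣ X ^ n - 1) (hadvd : a ∣ X ^ n - 1)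
    (hgC : Ideal.map (redMod F n) C = Ideal.span {toAmb F n g})
    (haC : Tor F n C = ↑(Ideal.span {toAmb F n a}))
    (hrev : ReversibleCode (DualNumber F) n ↑C) :
    ReversibleCode F n ↑(Ideal.span {toAmb F n g}) ∧
    ReversibleCode F n ↑(Ideal.span {toAmb F n a}) :=
  stmt7_general hn C g a hgC haC hrev
end
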